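/- Let d ≥ 1, ϑ ∈ (0, π/2], α ∈ (0,2), Λ ≥ 1, let Γ be a ϑ-admissible configuration and let k : ℝ^d × ℝ^d → [0,∞] be measurable, symmetric, and satisfy condition (A). Then there exist ϑ' ∈ (0, π/2] and C > 0, depending only on d, ϑ and Λ, such that for each h > 0 there is a configuration Γ^h on ℝ^d with the properties: (i) every cone in Γ^h(ℝ^d) has apex angle at least ϑ'; (ii) for all x, y ∈ hℤ^d with |x − y| > √d·h: C^{−1} (𝟙_{V^{Γ^h}[x]}(y) + 𝟙_{V^{Γ^h}[y]}(x)) |x−y|^{−d−α} ≤ ω^k_h(x,y) ≤ C |x−y|^{−d−α}. -/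

import Mathlib

open MeasureTheory Metric
open scoped ENNReal

noncomputable section

/-- `d`-dimensional Euclidean space. -/
abbrev Euc (d : ℕ) : Type := EuclideanSpace ℝ (Fin d)

/-- The open cone `Ṽ(v,θ)` with axis `v` and apex angle `θ`. -/
def coneSet (d : ℕ) (v : Euc d) (θ : ℝ) : Set (Euc d) :=
  {h | h ≠ 0 ∧ Real.cos θ < (inner ℝ v h : ℝ) / ‖h‖}

/-- The double cone `V(v,θ) = Ṽ(v,θ) ∪ (−Ṽ(v,θ))`. -/
def doubleCone (d : ℕ) (v : Euc d) (θ : ℝ) : Set (Euc d) :=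
  {h | h ∈ coneSet d v θ ∨ -h ∈ coneSet d v θ}

/-- A configuration assigns to each point of `ℝ^d` a double cone with apex at `0`,
recorded via its (unit) symmetry axis and its apex angle in `(0, π/2]`. -/
structure Config (d : ℕ) where
  axis : Euc d → Euc d
  angle : Euc d → ℝ
  axis_norm : ∀ x, ‖axis x‖ = 1
  angle_mem : ∀ x, angle x ∈ Set.Ioc 0 (Real.pi / 2)

/-- The double cone `Γ(x)` assigned to `x` by a configuration `Γ`. -/
def Config.cone {d : ℕ} (Γ : Config d) (x : Euc d) : Set (Euc d) :=
  doubleCone d (Γ.axis x) (Γ.angle x)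

/-- `Γ` is `ϑ`-bounded: every apex angle is at least `ϑ`. -/
def Config.Bounded {d : ℕ} (Γ : Config d) (ϑ : ℝ) : Prop :=
  ∀ x, ϑ ≤ Γ.angle x

/-- `Γ` is `ϑ`-admissible: `ϑ`-bounded and `{(x,y) | y - x ∈ Γ(x)}` is Borel. -/
def Config.Admissible {d : ℕ} (Γ : Config d) (ϑ : ℝ) : Prop :=
  Γ.Bounded ϑ ∧ MeasurableSet {p : Euc d × Euc d | p.2 - p.1 ∈ Γ.cone p.1}

/-- The indicator sum `𝟙_{V^Γ[x]}(y) + 𝟙_{V^Γ[y]}(x)`, valued in `ℝ≥0∞`. -/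
def indSum {d : ℕ} (Γ : Config d) (x y : Euc d) : ℝ≥0∞ :=
  (Γ.cone x).indicator (fun _ => (1 : ℝ≥0∞)) (y - x) +
  (Γ.cone y).indicator (fun _ => (1 : ℝ≥0∞)) (x - y)

/-- The kernel `|x - y| ^ (-d-α)` as an `ℝ≥0∞`-valued function (equal to `∞` on the diagonal). -/
def stbl (d : ℕ) (α : ℝ) (x y : Euc d) : ℝ≥0∞ :=
  (ENNReal.ofReal (dist x y)) ^ (-(d : ℝ) - α)

/-- The embedding of the integer lattice `ℤ^d` into `ℝ^d`. -/
def latt (d : ℕ) (z : Fin d → ℤ) : Euc d :=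
  (WithLp.equiv 2 (Fin d → ℝ)).symm (fun i => (z i : ℝ))

/-- The open cube `A_h(u)` of side length `h` centered at `u` (w.r.t. the max norm). -/
def cube (d : ℕ) (h : ℝ) (u : Euc d) : Set (Euc d) :=
  {x | ∀ i, |x i - u i| < h / 2}

/-- The translate `V[x] = V + x` of a set `V`. -/
def shiftSet (d : ℕ) (V : Set (Euc d)) (x : Euc d) : Set (Euc d) :=
  {y | y - x ∈ V}

/-- The "half-set" `V_r = {y ∈ V | closedBall y r ⊆ V}` (double half-cone for `V` a double cone). -/
def halfSet (d : ℕ) (V : Set (Euc d)) (r : ℝ) : Set (Euc d) :=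
  {y | y ∈ V ∧ Metric.closedBall y r ⊆ V}

/-- Adjacency of `w` and `z` in the (undirected) graph `G_U(Γ)`. -/
def adjIn (d : ℕ) (Γ : Config d) (U : Set (Euc d)) (w z : Euc d) : Prop :=
  (w ∈ U ∧ z - w ∈ Γ.cone w) ∨ (z ∈ U ∧ w - z ∈ Γ.cone z)

/-- Adjacency of two lattice points in the graph `G(Γ)`. -/
def adjL (d : ℕ) (Γ : Config d) (w z : Fin d → ℤ) : Prop :=
  latt d z - latt d w ∈ Γ.cone (latt d w) ∨ latt d w - latt d z ∈ Γ.cone (latt d z)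

/-- A lattice point `x` is `r`-`R`-connected if every lattice point within distance `r`
is connected to `x` by an undirected edge path in `G(Γ)` staying in the closed `R`-ball
around `x`. -/
def rRConnected (d : ℕ) (Γ : Config d) (r R : ℝ) (x : Fin d → ℤ) : Prop :=
  ∀ y : Fin d → ℤ, dist (latt d y) (latt d x) ≤ r →
    ∃ (N : ℕ) (p : ℕ → Fin d → ℤ), p 0 = x ∧ p N = y ∧
      (∀ i < N, adjL d Γ (p i) (p (i + 1))) ∧
      ∀ i ≤ N, dist (latt d (p i)) (latt d x) ≤ R

/-- Sum over pairs of lattice points satisfying a predicate `P` of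
`(f x - f y)² K x y`, valued in `ℝ≥0∞`. -/
def dSum (d : ℕ) (f : (Fin d → ℤ) → ℝ) (K : (Fin d → ℤ) → (Fin d → ℤ) → ℝ≥0∞)
    (P : (Fin d → ℤ) → (Fin d → ℤ) → Prop) : ℝ≥0∞ :=
  ∑' q : (Fin d → ℤ) × (Fin d → ℤ),
    Set.indicator {q : (Fin d → ℤ) × (Fin d → ℤ) | P q.1 q.2}
      (fun q => ENNReal.ofReal ((f q.1 - f q.2) ^ 2) * K q.1 q.2) q

/-!
Upper bound: if `|x - y| > √d` for lattice points then `|x - y|² ≥ d + 1` by integrality, so any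
two points of the `h`-cubes around `hx` and `hy` are at distance comparable to `h|x - y|`, and the
upper half of (A) integrates directly.

Lower bound: let `ρ` be a third of the chord `√(2(1 - cos ϑ))` of `ϑ` and cover the unit sphere
by finitely many `ρ`-balls centred in `F`. In the cube of side `ρh/2` around `X`, by pigeonhole
some `w ∈ F` lies within `ρ` of the axis of `Γ(s)` for a set of points `s` of outer measure at
least a `1/#F` fraction; this `w`, with the apex angle `ϑ'` of chord `ρ`, is the cone `Γʰ(X)`.
If `Y - X ∈ Γʰ(X)`, then for each such `s` and each `t` in the small cube around `Y` the direction
of `t - s` is within `ρ + ρ + ρ` of the axis of `Γ(s)`, so `t - s ∈ Γ(s)` and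
`k(s, t) ≳ |X - Y|^(-d-α)` on a product set of measure `≳ h^(2d) / #F`. The sets of such `s` are
measured by outer measure, which is all that the pigeonhole and the estimate `∫_A k ≥ c · |A|`
for `k ≥ c` on `A` require.
-/

section Cube

variable {d : ℕ}

lemma cube_eq_preimage (h : ℝ) (u : Euc d) :
    cube d h u = (MeasurableEquiv.toLp 2 (Fin d → ℝ)).symm ⁻¹'
      Set.univ.pi fun i => Set.Ioo (u i - h / 2) (u i + h / 2) := by
  ext x
  simp only [cube, Set.mem_preimage, Set.mem_univ_pi, Set.mem_Ioo, Set.mem_ofPred_eq,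
    MeasurableEquiv.coe_toLp_symm, abs_sub_lt_iff]
  refine forall_congr' fun i => ?_
  constructor <;> rintro ⟨h₁, h₂⟩ <;> constructor <;> linarith

lemma volume_cube (h : ℝ) (u : Euc d) :
    volume (cube d h u) = ENNReal.ofReal h ^ d := by
  rw [cube_eq_preimage,
    (EuclideanSpace.volume_preserving_symm_measurableEquiv_toLp (Fin d)).measure_preimage
      (MeasurableSet.univ_pi fun _ => measurableSet_Ioo).nullMeasurableSet, volume_pi_pi]
  simp [Real.volume_Ioo]

lemma cube_mono {h h' : ℝ} (hh : h' ≤ h) (u : Euc d) : cube d h' u ⊆ cube d h u :=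
  fun _ hx i => (hx i).trans_le (by linarith)

lemma norm_sub_le_of_mem_cube {h : ℝ} (hh : 0 ≤ h) {u x : Euc d} (hx : x ∈ cube d h u) :
    ‖x - u‖ ≤ Real.sqrt d * (h / 2) := by
  have hcoord : ∀ i, ‖(x - u) i‖ ^ 2 ≤ (h / 2) ^ 2 := fun i => by
    rw [PiLp.sub_apply, Real.norm_eq_abs, sq_abs]
    exact sq_le_sq' (abs_lt.mp (hx i)).1.le (abs_lt.mp (hx i)).2.le
  calc ‖x - u‖ = Real.sqrt (∑ i, ‖(x - u) i‖ ^ 2) := EuclideanSpace.norm_eq _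
    _ ≤ Real.sqrt (d * (h / 2) ^ 2) := by
      gcongr
      simpa using Finset.sum_le_sum fun i (_ : i ∈ Finset.univ) => hcoord i
    _ = Real.sqrt d * (h / 2) := by
      rw [Real.sqrt_mul (Nat.cast_nonneg d), Real.sqrt_sq (by linarith)]

lemma norm_sub_sub_sub_le_of_mem_cube {l : ℝ} (hl : 0 ≤ l) {X Y s t : Euc d}
    (hs : s ∈ cube d l X) (ht : t ∈ cube d l Y) : ‖(t - s) - (Y - X)‖ ≤ Real.sqrt d * l := by
  calc ‖(t - s) - (Y - X)‖ = ‖(t - Y) - (s - X)‖ := by congr 1; abel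
    _ ≤ ‖t - Y‖ + ‖s - X‖ := norm_sub_le _ _
    _ ≤ Real.sqrt d * (l / 2) + Real.sqrt d * (l / 2) :=
      add_le_add (norm_sub_le_of_mem_cube hl ht) (norm_sub_le_of_mem_cube hl hs)
    _ = Real.sqrt d * l := by ring

lemma abs_dist_sub_dist_le_of_mem_cube {l : ℝ} (hl : 0 ≤ l) {X Y s t : Euc d}
    (hs : s ∈ cube d l X) (ht : t ∈ cube d l Y) : |dist s t - dist X Y| ≤ Real.sqrt d * l := by
  rw [dist_comm s t, dist_comm X Y, dist_eq_norm, dist_eq_norm]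
  exact (abs_norm_sub_norm_le _ _).trans (norm_sub_sub_sub_le_of_mem_cube hl hs ht)

lemma dist_le_two_mul_of_mem_cube {δ h : ℝ} (hδ : 0 ≤ δ) (hδ1 : δ ≤ 1) (hh : 0 ≤ h)
    {X Y s t : Euc d} (hsep : Real.sqrt d * h ≤ dist X Y) (hs : s ∈ cube d (δ * h) X)
    (ht : t ∈ cube d (δ * h) Y) : dist s t ≤ 2 * dist X Y := by
  have hst := (abs_le.mp (abs_dist_sub_dist_le_of_mem_cube (by positivity) hs ht)).2
  have hδD : δ * (Real.sqrt d * h) ≤ dist X Y :=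
    (mul_le_mul_of_nonneg_left hsep hδ).trans (mul_le_of_le_one_left dist_nonneg hδ1)
  linarith

end Cube

lemma sqrt_succ_le_dist_latt {d : ℕ} {x y : Fin d → ℤ}
    (hxy : Real.sqrt d < dist (latt d x) (latt d y)) :
    Real.sqrt (d + 1) ≤ dist (latt d x) (latt d y) := by
  have hdist : dist (latt d x) (latt d y) = Real.sqrt ((∑ i, (x i - y i) ^ 2 : ℤ) : ℝ) := by
    rw [EuclideanSpace.dist_eq]
    push_cast
    simp [latt, Real.dist_eq, sq_abs]
  rw [hdist] at hxy ⊢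
  have hlt : (d : ℤ) < ∑ i, (x i - y i) ^ 2 := by
    exact_mod_cast (Real.sqrt_lt_sqrt_iff (Nat.cast_nonneg d)).mp hxy
  exact Real.sqrt_le_sqrt (by exact_mod_cast hlt)

lemma sqrt_succ_mul_le_dist_smul_latt {d : ℕ} {x y : Fin d → ℤ} {h : ℝ} (hh : 0 < h)
    (hxy : Real.sqrt d * h < dist (h • latt d x) (h • latt d y)) :
    Real.sqrt (d + 1) * h ≤ dist (h • latt d x) (h • latt d y) := by
  rw [dist_smul₀, Real.norm_of_nonneg hh.le, mul_comm h] at hxy ⊢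
  exact mul_le_mul_of_nonneg_right (sqrt_succ_le_dist_latt (lt_of_mul_lt_mul_right hxy hh.le))
    hh.le

lemma sqrt_div_sqrt_succ_lt_one (d : ℕ) : Real.sqrt d / Real.sqrt (d + 1) < 1 :=
  (div_lt_one (Real.sqrt_pos.mpr (by positivity))).mpr
    (Real.sqrt_lt_sqrt (Nat.cast_nonneg d) (lt_add_one _))

section Direction

variable {E : Type*} [NormedAddCommGroup E] [NormedSpace ℝ E]

lemma norm_inv_smul_sub_inv_smul_le {u : E} (hu : u ≠ 0) (v : E) :
    ‖‖u‖⁻¹ • u - ‖v‖⁻¹ • v‖ ≤ 2 * ‖u - v‖ / ‖u‖ := by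
  have hnu : 0 < ‖u‖ := norm_pos_iff.mpr hu
  rcases eq_or_ne v 0 with rfl | hv
  · rw [norm_zero, inv_zero, zero_smul, sub_zero, sub_zero, norm_smul, norm_inv, norm_norm,
      inv_mul_cancel₀ hnu.ne', mul_div_assoc, div_self hnu.ne']
    norm_num
  have hnv : 0 < ‖v‖ := norm_pos_iff.mpr hv
  have hsplit : ‖u‖⁻¹ • u - ‖v‖⁻¹ • v = ‖u‖⁻¹ • (u - v) + (‖u‖⁻¹ - ‖v‖⁻¹) • v := by
    rw [smul_sub, sub_smul]; abel
  have hfirst : ‖‖u‖⁻¹ • (u - v)‖ = ‖u - v‖ / ‖u‖ := by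
    rw [norm_smul, norm_inv, norm_norm, inv_mul_eq_div]
  have hscale : ‖(‖u‖⁻¹ - ‖v‖⁻¹) • v‖ = |‖v‖ - ‖u‖| / ‖u‖ := by
    rw [norm_smul, Real.norm_eq_abs, inv_sub_inv hnu.ne' hnv.ne', abs_div,
      abs_of_pos (mul_pos hnu hnv)]
    field_simp
  calc ‖‖u‖⁻¹ • u - ‖v‖⁻¹ • v‖
      ≤ ‖u - v‖ / ‖u‖ + |‖v‖ - ‖u‖| / ‖u‖ := by
        rw [hsplit, ← hfirst, ← hscale]
        exact norm_add_le _ _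
    _ ≤ ‖u - v‖ / ‖u‖ + ‖u - v‖ / ‖u‖ := by
        gcongr
        rw [norm_sub_rev u v]
        exact abs_norm_sub_norm_le v u
    _ = 2 * ‖u - v‖ / ‖u‖ := by ring

end Direction

section Cone

variable {d : ℕ}

lemma mem_coneSet_iff {w v : Euc d} {θ : ℝ} (hw : ‖w‖ = 1) :
    v ∈ coneSet d w θ ↔ v ≠ 0 ∧ ‖‖v‖⁻¹ • v - w‖ ^ 2 < 2 * (1 - Real.cos θ) := by
  refine and_congr_right fun hv => ?_
  have hnv : 0 < ‖v‖ := norm_pos_iff.mpr hv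
  have hchord : ‖‖v‖⁻¹ • v - w‖ ^ 2 = 2 - 2 * (inner ℝ w v / ‖v‖) := by
    rw [norm_sub_sq_real, norm_smul, norm_inv, norm_norm, inv_mul_cancel₀ hnv.ne', hw,
      real_inner_smul_left, real_inner_comm]
    ring
  rw [hchord]
  constructor <;> intro h <;> linarith

lemma mem_coneSet_of_norm_sub_le {a w u v : Euc d} {θ θ' r ε : ℝ} (ha : ‖a‖ = 1)
    (hw : ‖w‖ = 1) (hv : v ∈ coneSet d w θ') (huv : ‖u - v‖ ≤ ε * ‖v‖) (hε : ε < 1)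
    (hr : 0 ≤ r) (hθ' : 2 * (1 - Real.cos θ') ≤ r ^ 2)
    (hθ : (r + 2 * ε + ‖a - w‖) ^ 2 ≤ 2 * (1 - Real.cos θ)) :
    u ∈ coneSet d a θ := by
  obtain ⟨hv0, hvw⟩ := (mem_coneSet_iff hw).mp hv
  have hnv : 0 < ‖v‖ := norm_pos_iff.mpr hv0
  have hu0 : u ≠ 0 := by
    rintro rfl
    rw [zero_sub, norm_neg] at huv
    nlinarith
  have hvw' : ‖‖v‖⁻¹ • v - w‖ < r := lt_of_pow_lt_pow_left₀ 2 hr (hvw.trans_le hθ')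
  have huv' : ‖‖u‖⁻¹ • u - ‖v‖⁻¹ • v‖ ≤ 2 * ε := by
    rw [norm_sub_rev]
    refine (norm_inv_smul_sub_inv_smul_le hv0 u).trans ?_
    rw [div_le_iff₀ hnv, norm_sub_rev]
    linarith
  have hua : ‖‖u‖⁻¹ • u - a‖ < r + 2 * ε + ‖a - w‖ := by
    calc ‖‖u‖⁻¹ • u - a‖
        = ‖(‖u‖⁻¹ • u - ‖v‖⁻¹ • v) + (‖v‖⁻¹ • v - w) + (w - a)‖ := by congr 1; abel
      _ ≤ ‖‖u‖⁻¹ • u - ‖v‖⁻¹ • v‖ + ‖‖v‖⁻¹ • v - w‖ + ‖w - a‖ := norm_add₃_le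
      _ < r + 2 * ε + ‖a - w‖ := by rw [norm_sub_rev w a]; linarith
  exact (mem_coneSet_iff ha).mpr
    ⟨hu0, (pow_lt_pow_left₀ hua (norm_nonneg _) two_ne_zero).trans_le hθ⟩

lemma mem_doubleCone_of_norm_sub_le {a w u v : Euc d} {θ θ' r ε : ℝ} (ha : ‖a‖ = 1)
    (hw : ‖w‖ = 1) (hv : v ∈ doubleCone d w θ') (huv : ‖u - v‖ ≤ ε * ‖v‖) (hε : ε < 1)
    (hr : 0 ≤ r) (hθ' : 2 * (1 - Real.cos θ') ≤ r ^ 2)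
    (hθ : (r + 2 * ε + ‖a - w‖) ^ 2 ≤ 2 * (1 - Real.cos θ)) :
    u ∈ doubleCone d a θ := by
  rcases hv with hv | hv
  · exact Or.inl (mem_coneSet_of_norm_sub_le ha hw hv huv hε hr hθ' hθ)
  · refine Or.inr (mem_coneSet_of_norm_sub_le ha hw hv ?_ hε hr hθ' hθ)
    rwa [neg_sub_neg, norm_sub_rev, norm_neg]

lemma Config.Bounded.cos_angle_le {Γ : Config d} {ϑ : ℝ} (hΓ : Γ.Bounded ϑ) (hϑ : 0 ≤ ϑ)
    (x : Euc d) : Real.cos (Γ.angle x) ≤ Real.cos ϑ :=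
  Real.cos_le_cos_of_nonneg_of_le_pi hϑ (by linarith [(Γ.angle_mem x).2, Real.pi_pos]) (hΓ x)

end Cone

section Measure

variable {α : Type*} [MeasurableSpace α] (μ : Measure α)

lemma exists_measure_le_card_mul {ι : Type*} {F : Finset ι} (hF : F.Nonempty) (G : ι → Set α)
    {Q : Set α} (hQ : Q ⊆ ⋃ i ∈ F, G i) : ∃ i ∈ F, μ Q ≤ F.card * μ (G i) := by
  obtain ⟨i, hi, hmax⟩ := F.exists_max_image (fun i => μ (G i)) hF
  refine ⟨i, hi, ?_⟩
  calc μ Q ≤ μ (⋃ i ∈ F, G i) := measure_mono hQ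
    _ ≤ ∑ j ∈ F, μ (G j) := measure_biUnion_finset_le F G
    _ ≤ F.card • μ (G i) := Finset.sum_le_card_nsmul F _ _ hmax
    _ = F.card * μ (G i) := nsmul_eq_mul _ _

variable {μ}

lemma mul_measure_le_setLIntegral {f : α → ℝ≥0∞} (hf : Measurable f) {A : Set α} {c : ℝ≥0∞}
    (hc : ∀ x ∈ A, c ≤ f x) : c * μ A ≤ ∫⁻ x in A, f x ∂μ :=
  (setLIntegral_const A c).symm.le.trans (setLIntegral_mono hf hc)

lemma mul_measure_le_setLIntegral_prod {β : Type*} [MeasurableSpace β] {ν : Measure β} [SFinite ν]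
    {f : α → β → ℝ≥0∞} (hf : Measurable (Function.uncurry f)) {A S : Set α} {B T : Set β}
    (hS : S ⊆ A) (hT : T ⊆ B) {c : ℝ≥0∞} (hc : ∀ s ∈ S, ∀ t ∈ T, c ≤ f s t) :
    c * (μ S * ν T) ≤ ∫⁻ p in A ×ˢ B, f p.1 p.2 ∂μ.prod ν := by
  rw [← Measure.prod_prod]
  exact (mul_measure_le_setLIntegral hf fun p hp => hc _ hp.1 _ hp.2).trans
    (lintegral_mono_set (Set.prod_mono hS hT))

end Measure

lemma exists_finset_unit_net (d : ℕ) {r : ℝ} (hr : 0 < r) :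
    ∃ F : Finset (Euc d), (∀ w ∈ F, ‖w‖ = 1) ∧ ∀ a : Euc d, ‖a‖ = 1 → ∃ w ∈ F, ‖a - w‖ < r := by
  obtain ⟨t, hts, htfin, hcov⟩ := (isCompact_sphere (0 : Euc d) 1).finite_cover_balls hr
  refine ⟨htfin.toFinset, fun w hw => ?_, fun a ha => ?_⟩
  · simpa using hts (htfin.mem_toFinset.mp hw)
  · obtain ⟨w, hw, haw⟩ := Set.mem_iUnion₂.mp (hcov (by simpa using ha))
    exact ⟨w, htfin.mem_toFinset.mpr hw, by rwa [mem_ball, dist_eq_norm] at haw⟩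

section Kernel

variable {d : ℕ} {α : ℝ}

lemma stbl_eq_ofReal {x y : Euc d} (hxy : 0 < dist x y) :
    stbl d α x y = ENNReal.ofReal (dist x y ^ (-(d : ℝ) - α)) :=
  ENNReal.ofReal_rpow_of_pos hxy

lemma stbl_le_ofReal_rpow (hα : 0 ≤ α) {x y : Euc d} {r : ℝ} (hr : 0 < r) (hxy : r ≤ dist x y) :
    stbl d α x y ≤ ENNReal.ofReal (r ^ (-(d : ℝ) - α)) := by
  rw [stbl_eq_ofReal (hr.trans_le hxy)]
  exact ENNReal.ofReal_le_ofReal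
    (Real.rpow_le_rpow_of_nonpos hr hxy (by linarith [(Nat.cast_nonneg d : (0 : ℝ) ≤ d)]))

lemma ofReal_rpow_le_stbl (hα : 0 ≤ α) {x y : Euc d} {r : ℝ} (hxy : 0 < dist x y)
    (hr : dist x y ≤ r) : ENNReal.ofReal (r ^ (-(d : ℝ) - α)) ≤ stbl d α x y := by
  rw [stbl_eq_ofReal hxy]
  exact ENNReal.ofReal_le_ofReal
    (Real.rpow_le_rpow_of_nonpos hxy hr (by linarith [(Nat.cast_nonneg d : (0 : ℝ) ≤ d)]))

lemma Config.ne_zero_of_mem_cone {Γ : Config d} {x v : Euc d} (hv : v ∈ Γ.cone x) : v ≠ 0 := by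
  rcases hv with hv | hv
  exacts [hv.1, neg_ne_zero.mp hv.1]

lemma indSum_le_two (Γ : Config d) (x y : Euc d) : indSum Γ x y ≤ 2 := by
  have hind : ∀ (V : Set (Euc d)) z, V.indicator (fun _ => (1 : ℝ≥0∞)) z ≤ 1 :=
    fun V z => Set.indicator_le_self' (fun _ _ => zero_le) z
  exact (add_le_add (hind _ _) (hind _ _)).trans_eq one_add_one_eq_two

lemma indSum_ne_zero_iff {Γ : Config d} {x y : Euc d} :
    indSum Γ x y ≠ 0 ↔ y - x ∈ Γ.cone x ∨ x - y ∈ Γ.cone y := by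
  simp only [indSum, ne_eq, add_eq_zero, Set.indicator_apply_eq_zero, one_ne_zero, imp_false,
    not_and_or, not_not]

lemma one_le_indSum {Γ : Config d} {x y : Euc d} (h : y - x ∈ Γ.cone x ∨ x - y ∈ Γ.cone y) :
    1 ≤ indSum Γ x y := by
  rcases h with h | h
  · exact (Set.indicator_of_mem h (fun _ => (1 : ℝ≥0∞))).symm.le.trans le_self_add
  · exact (Set.indicator_of_mem h (fun _ => (1 : ℝ≥0∞))).symm.le.trans le_add_self

lemma ofReal_rpow_le_of_mem_cone {Γ : Config d} {Λ : ℝ} {k : Euc d → Euc d → ℝ≥0∞}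
    (hkA : ∀ x y, (ENNReal.ofReal Λ)⁻¹ * indSum Γ x y * stbl d α x y ≤ k x y) (hα : 0 ≤ α)
    {s t : Euc d} {R : ℝ} (hcone : t - s ∈ Γ.cone s ∨ s - t ∈ Γ.cone t) (hst : dist s t ≤ R) :
    (ENNReal.ofReal Λ)⁻¹ * ENNReal.ofReal (R ^ (-(d : ℝ) - α)) ≤ k s t := by
  have hpos : 0 < dist s t := by
    rcases hcone with h | h
    · exact dist_pos.mpr (sub_ne_zero.mp (Config.ne_zero_of_mem_cone h)).symm
    · exact dist_pos.mpr (sub_ne_zero.mp (Config.ne_zero_of_mem_cone h))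
  calc (ENNReal.ofReal Λ)⁻¹ * ENNReal.ofReal (R ^ (-(d : ℝ) - α))
      = (ENNReal.ofReal Λ)⁻¹ * 1 * ENNReal.ofReal (R ^ (-(d : ℝ) - α)) := by rw [mul_one]
    _ ≤ (ENNReal.ofReal Λ)⁻¹ * indSum Γ s t * stbl d α s t := by
      gcongr
      exacts [one_le_indSum hcone, ofReal_rpow_le_stbl hα hpos hst]
    _ ≤ k s t := hkA s t

end Kernel

section Configuration

variable {d : ℕ}

lemma Config.Bounded.sub_mem_cone_of_mem_cube {Γ : Config d} {ϑ : ℝ} (hΓ : Γ.Bounded ϑ) (hϑ : 0 ≤ ϑ)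
    {θ ρ δ h : ℝ} (hθ : 2 * (1 - Real.cos θ) ≤ ρ ^ 2) (hρ : 0 ≤ ρ)
    (hϑρ : (3 * ρ) ^ 2 ≤ 2 * (1 - Real.cos ϑ)) (hδ : 0 ≤ δ) (hδρ : 2 * δ ≤ ρ) (hδ1 : δ < 1)
    (hh : 0 ≤ h) {w X Y s t : Euc d} (hw : ‖w‖ = 1) (hXY : Y - X ∈ doubleCone d w θ)
    (hsep : Real.sqrt d * h ≤ dist X Y) (hs : s ∈ cube d (δ * h) X) (hsw : ‖Γ.axis s - w‖ < ρ)
    (ht : t ∈ cube d (δ * h) Y) : t - s ∈ Γ.cone s := by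
  refine mem_doubleCone_of_norm_sub_le (Γ.axis_norm s) hw hXY ?_ hδ1 hρ hθ ?_
  · calc ‖(t - s) - (Y - X)‖ ≤ Real.sqrt d * (δ * h) :=
          norm_sub_sub_sub_le_of_mem_cube (by positivity) hs ht
      _ = δ * (Real.sqrt d * h) := by ring
      _ ≤ δ * ‖Y - X‖ := by rw [← dist_eq_norm, dist_comm]; gcongr
  · calc (ρ + 2 * δ + ‖Γ.axis s - w‖) ^ 2 ≤ (3 * ρ) ^ 2 :=
          pow_le_pow_left₀ (by positivity) (by linarith) 2
      _ ≤ 2 * (1 - Real.cos (Γ.angle s)) := by linarith [hΓ.cos_angle_le hϑ s]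

lemma exists_config_volume_axis_near (Γ : Config d) {F : Finset (Euc d)} (hF : ∀ w ∈ F, ‖w‖ = 1)
    {ρ : ℝ} (hnet : ∀ a : Euc d, ‖a‖ = 1 → ∃ w ∈ F, ‖a - w‖ < ρ) {θ : ℝ}
    (hθ : θ ∈ Set.Ioc 0 (Real.pi / 2)) (l : ℝ) :
    ∃ Γh : Config d, (∀ X, Γh.angle X = θ) ∧ ∀ X, volume (cube d l X) ≤
      F.card * volume {s ∈ cube d l X | ‖Γ.axis s - Γh.axis X‖ < ρ} := by
  have hF₀ : F.Nonempty :=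
    let ⟨w, hw, _⟩ := hnet _ (Γ.axis_norm 0)
    ⟨w, hw⟩
  have hsel : ∀ X, ∃ w ∈ F, volume (cube d l X) ≤
      F.card * volume {s ∈ cube d l X | ‖Γ.axis s - w‖ < ρ} := fun X =>
    exists_measure_le_card_mul volume hF₀ _ fun s hs =>
      let ⟨w, hw, hsw⟩ := hnet _ (Γ.axis_norm s)
      Set.mem_biUnion hw ⟨hs, hsw⟩
  choose w hwF hw using hsel
  exact ⟨⟨w, fun _ => θ, fun X => hF _ (hwF X), fun _ => hθ⟩, fun _ => rfl, hw⟩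

end Configuration

section Bounds

variable {d : ℕ} {α Λ : ℝ} {k : Euc d → Euc d → ℝ≥0∞}

lemma mul_volume_sq_le_card_mul_lintegral {Γ Γh : Config d} {ϑ ρ δ h : ℝ} {N : ℕ}
    (hkA : ∀ x y, (ENNReal.ofReal Λ)⁻¹ * indSum Γ x y * stbl d α x y ≤ k x y)
    (hk : Measurable (Function.uncurry k)) (hα : 0 ≤ α) (hΓ : Γ.Bounded ϑ) (hϑ : 0 ≤ ϑ)
    (hvol : ∀ X, volume (cube d (δ * h) X) ≤
      N * volume {s ∈ cube d (δ * h) X | ‖Γ.axis s - Γh.axis X‖ < ρ})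
    (hθ : ∀ X, 2 * (1 - Real.cos (Γh.angle X)) ≤ ρ ^ 2) (hρ : 0 ≤ ρ)
    (hϑρ : (3 * ρ) ^ 2 ≤ 2 * (1 - Real.cos ϑ)) (hδ : 0 ≤ δ) (hδρ : 2 * δ ≤ ρ) (hδ1 : δ < 1)
    (hh : 0 ≤ h) {X Y : Euc d} (hsep : Real.sqrt d * h ≤ dist X Y) (hXY : indSum Γh X Y ≠ 0) :
    (ENNReal.ofReal Λ)⁻¹ * ENNReal.ofReal ((2 * dist X Y) ^ (-(d : ℝ) - α)) *
        volume (cube d (δ * h) X) ^ 2 ≤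
      N * ∫⁻ p in cube d h X ×ˢ cube d h Y, k p.1 p.2 := by
  set κ := (ENNReal.ofReal Λ)⁻¹ * ENNReal.ofReal ((2 * dist X Y) ^ (-(d : ℝ) - α))
  set S := fun Z => {s ∈ cube d (δ * h) Z | ‖Γ.axis s - Γh.axis Z‖ < ρ}
  have hQ : ∀ Z, cube d (δ * h) Z ⊆ cube d h Z := cube_mono (by nlinarith)
  have hdist : ∀ s ∈ cube d (δ * h) X, ∀ t ∈ cube d (δ * h) Y, dist s t ≤ 2 * dist X Y :=
    fun s hs t ht => dist_le_two_mul_of_mem_cube hδ hδ1.le hh hsep hs ht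
  have hvolXY : volume (cube d (δ * h) Y) = volume (cube d (δ * h) X) := by
    rw [volume_cube, volume_cube]
  rcases indSum_ne_zero_iff.mp hXY with hX | hY
  · have hcone : ∀ s ∈ S X, ∀ t ∈ cube d (δ * h) Y, κ ≤ k s t := fun s hs t ht =>
      ofReal_rpow_le_of_mem_cone hkA hα (Or.inl (hΓ.sub_mem_cone_of_mem_cube hϑ (hθ X) hρ hϑρ hδ
        hδρ hδ1 hh (Γh.axis_norm X) hX hsep hs.1 hs.2 ht)) (hdist s hs.1 t ht)
    calc κ * volume (cube d (δ * h) X) ^ 2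
        ≤ κ * (N * volume (S X) * volume (cube d (δ * h) Y)) := by
          rw [sq, hvolXY]; gcongr; exact hvol X
      _ = N * (κ * (volume (S X) * volume (cube d (δ * h) Y))) := by ring
      _ ≤ _ := by
          gcongr
          exact mul_measure_le_setLIntegral_prod hk (fun s hs => hQ X hs.1) (hQ Y) hcone
  · have hcone : ∀ s ∈ cube d (δ * h) X, ∀ t ∈ S Y, κ ≤ k s t := fun s hs t ht =>
      ofReal_rpow_le_of_mem_cone hkA hα (Or.inr (hΓ.sub_mem_cone_of_mem_cube hϑ (hθ Y) hρ hϑρ hδ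
        hδρ hδ1 hh (Γh.axis_norm Y) hY (dist_comm X Y ▸ hsep) ht.1 ht.2 hs)) (hdist s hs t ht.1)
    calc κ * volume (cube d (δ * h) X) ^ 2
        ≤ κ * (volume (cube d (δ * h) X) * (N * volume (S Y))) := by
          rw [sq]; gcongr; rw [← hvolXY]; exact hvol Y
      _ = N * (κ * (volume (cube d (δ * h) X) * volume (S Y))) := by ring
      _ ≤ _ := by
          gcongr
          exact mul_measure_le_setLIntegral_prod hk (hQ X) (fun t ht => hQ Y ht.1) hcone

lemma lintegral_cube_prod_le (hkA : ∀ x y, k x y ≤ ENNReal.ofReal Λ * stbl d α x y) (hα : 0 ≤ α)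
    {h r : ℝ} (hh : 0 ≤ h) (hr : 0 < r) {X Y : Euc d} (hsep : r + Real.sqrt d * h ≤ dist X Y) :
    ∫⁻ p in cube d h X ×ˢ cube d h Y, k p.1 p.2 ≤
      ENNReal.ofReal (h ^ (2 * d)) * (ENNReal.ofReal Λ * ENNReal.ofReal (r ^ (-(d : ℝ) - α))) := by
  have hbound : ∀ p ∈ cube d h X ×ˢ cube d h Y,
      k p.1 p.2 ≤ ENNReal.ofReal Λ * ENNReal.ofReal (r ^ (-(d : ℝ) - α)) := fun p hp => by
    refine (hkA _ _).trans (mul_le_mul_right (stbl_le_ofReal_rpow hα hr ?_) _)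
    linarith [(abs_le.mp (abs_dist_sub_dist_le_of_mem_cube hh hp.1 hp.2)).1]
  refine (setLIntegral_mono measurable_const hbound).trans_eq ?_
  rw [setLIntegral_const, Measure.volume_eq_prod, Measure.prod_prod, volume_cube, volume_cube,
    ← pow_add, ← two_mul, ← ENNReal.ofReal_pow hh, mul_comm]

lemma inv_mul_lintegral_cube_prod_le (hkA : ∀ x y, k x y ≤ ENNReal.ofReal Λ * stbl d α x y)
    (hα : 0 ≤ α) (hα₂ : α ≤ 2) (hΛ : 0 ≤ Λ) {h : ℝ} (hh : 0 < h) {X Y : Euc d}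
    (hsep : Real.sqrt (d + 1) * h ≤ dist X Y) :
    (ENNReal.ofReal (h ^ (2 * d)))⁻¹ * ∫⁻ p in cube d h X ×ˢ cube d h Y, k p.1 p.2 ≤
      ENNReal.ofReal (Λ * (1 - Real.sqrt d / Real.sqrt (d + 1)) ^ (-(d : ℝ) - 2)) *
        stbl d α X Y := by
  set c := 1 - Real.sqrt d / Real.sqrt (d + 1)
  have hsqrt : 0 < Real.sqrt (d + 1) := Real.sqrt_pos.mpr (by positivity)
  have hc₀ : 0 < c := sub_pos.mpr (sqrt_div_sqrt_succ_lt_one d)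
  have hc₁ : c ≤ 1 := sub_le_self _ (by positivity)
  have hD : 0 < dist X Y := (mul_pos hsqrt hh).trans_le hsep
  have hsep' : c * dist X Y + Real.sqrt d * h ≤ dist X Y := by
    have : Real.sqrt d * h ≤ Real.sqrt d / Real.sqrt (d + 1) * dist X Y := by
      rw [div_mul_eq_mul_div, le_div_iff₀ hsqrt]
      nlinarith [Real.sqrt_nonneg d]
    linarith
  rw [ENNReal.inv_mul_le_iff (by simp [hh]) ENNReal.ofReal_ne_top]
  refine (lintegral_cube_prod_le hkA hα hh.le (mul_pos hc₀ hD) hsep').trans (mul_le_mul_right ?_ _)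
  rw [stbl_eq_ofReal hD, ← ENNReal.ofReal_mul hΛ, ← ENNReal.ofReal_mul (by positivity),
    Real.mul_rpow hc₀.le hD.le, ← mul_assoc]
  refine ENNReal.ofReal_le_ofReal (mul_le_mul_of_nonneg_right (mul_le_mul_of_nonneg_left
    (Real.rpow_le_rpow_of_exponent_ge hc₀ hc₁ (by linarith)) hΛ) (by positivity))

lemma inv_mul_two_mul_rpow_mul_pow_le (hα₂ : α ≤ 2) (hΛ : 0 < Λ) {δ : ℝ} (hδ : 0 < δ) {N : ℕ}
    (hN : 0 < N) {D : ℝ} (hD : 0 < D) (h : ℝ) :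
    (2 * Λ * N * 2 ^ ((d : ℝ) + 2) / δ ^ (2 * d))⁻¹ * 2 * D ^ (-(d : ℝ) - α) * h ^ (2 * d) ≤
      Λ⁻¹ * (2 * D) ^ (-(d : ℝ) - α) * (δ * h) ^ (2 * d) / N := by
  have h₂ : ((2 : ℝ) ^ ((d : ℝ) + 2))⁻¹ ≤ 2 ^ (-(d : ℝ) - α) := by
    rw [← Real.rpow_neg zero_le_two]
    exact Real.rpow_le_rpow_of_exponent_le one_le_two (by linarith)
  have hNR : (0 : ℝ) < N := Nat.cast_pos.mpr hN
  have hpow : 0 ≤ δ ^ (2 * d) * h ^ (2 * d) := by rw [pow_mul h]; positivity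
  rw [Real.mul_rpow zero_le_two hD.le, mul_pow]
  calc (2 * Λ * N * 2 ^ ((d : ℝ) + 2) / δ ^ (2 * d))⁻¹ * 2 * D ^ (-(d : ℝ) - α) * h ^ (2 * d)
      = Λ⁻¹ * ((2 : ℝ) ^ ((d : ℝ) + 2))⁻¹ * D ^ (-(d : ℝ) - α) * (δ ^ (2 * d) * h ^ (2 * d)) /
          N := by field_simp
    _ ≤ Λ⁻¹ * (2 ^ (-(d : ℝ) - α) * D ^ (-(d : ℝ) - α)) * (δ ^ (2 * d) * h ^ (2 * d)) / N := by
        rw [← mul_assoc Λ⁻¹]; gcongr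

lemma inv_mul_mul_stbl_le_of_le_card_mul {δ h : ℝ} {N : ℕ} {i I : ℝ≥0∞} (hα₂ : α ≤ 2)
    (hΛ : 0 < Λ) (hδ : 0 < δ) (hh : 0 < h) (hN : 0 < N) {X Y : Euc d} (hD : 0 < dist X Y)
    (hi : i ≤ 2) (hI : i ≠ 0 → (ENNReal.ofReal Λ)⁻¹ *
      ENNReal.ofReal ((2 * dist X Y) ^ (-(d : ℝ) - α)) * volume (cube d (δ * h) X) ^ 2 ≤ N * I) :
    (ENNReal.ofReal (2 * Λ * N * 2 ^ ((d : ℝ) + 2) / δ ^ (2 * d)))⁻¹ * i * stbl d α X Y ≤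
      (ENNReal.ofReal (h ^ (2 * d)))⁻¹ * I := by
  rcases eq_or_ne i 0 with rfl | hi₀
  · simp
  set C := 2 * Λ * N * 2 ^ ((d : ℝ) + 2) / δ ^ (2 * d)
  set e := -(d : ℝ) - α
  have hC : 0 < C := by positivity
  have hNR : (0 : ℝ) < N := Nat.cast_pos.mpr hN
  have hK : ENNReal.ofReal (Λ⁻¹ * (2 * dist X Y) ^ e * (δ * h) ^ (2 * d)) ≤ N * I := by
    convert hI hi₀ using 2
    rw [volume_cube, ← pow_mul, mul_comm d 2, ← ENNReal.ofReal_pow (by positivity),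
      ENNReal.ofReal_mul (by positivity), ENNReal.ofReal_mul (by positivity),
      ENNReal.ofReal_inv_of_pos hΛ]
  have hreal := inv_mul_two_mul_rpow_mul_pow_le (d := d) hα₂ hΛ hδ hN hD h
  calc (ENNReal.ofReal C)⁻¹ * i * stbl d α X Y
      ≤ ENNReal.ofReal C⁻¹ * 2 * ENNReal.ofReal (dist X Y ^ e) := by
        rw [stbl_eq_ofReal hD, ENNReal.ofReal_inv_of_pos hC]; gcongr
    _ = ENNReal.ofReal (C⁻¹ * 2 * dist X Y ^ e) := by
        rw [ENNReal.ofReal_mul (by positivity), ENNReal.ofReal_mul (by positivity),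
          ENNReal.ofReal_ofNat]
    _ ≤ (ENNReal.ofReal (h ^ (2 * d)))⁻¹ * I := by
        rw [← ENNReal.div_eq_inv_mul, ENNReal.le_div_iff_mul_le (Or.inl (by simp [hh]))
          (Or.inl ENNReal.ofReal_ne_top), ← ENNReal.ofReal_mul (by positivity)]
        calc _ ≤ ENNReal.ofReal (Λ⁻¹ * (2 * dist X Y) ^ e * (δ * h) ^ (2 * d) / N) :=
              ENNReal.ofReal_le_ofReal hreal
          _ = ENNReal.ofReal (Λ⁻¹ * (2 * dist X Y) ^ e * (δ * h) ^ (2 * d)) / N := by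
              rw [ENNReal.ofReal_div_of_pos hNR, ENNReal.ofReal_natCast]
          _ ≤ I := by
              rwa [ENNReal.div_le_iff' (by simpa using hN.ne') (ENNReal.natCast_ne_top N)]

end Bounds

lemma exists_chord_parameters {ϑ : ℝ} (hϑ : ϑ ∈ Set.Ioc 0 (Real.pi / 2)) :
    ∃ ρ ϑ' : ℝ, 0 < ρ ∧ ρ < 2 ∧ (3 * ρ) ^ 2 ≤ 2 * (1 - Real.cos ϑ) ∧
      ϑ' ∈ Set.Ioc 0 (Real.pi / 2) ∧ 2 * (1 - Real.cos ϑ') ≤ ρ ^ 2 := by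
  have hcos : Real.cos ϑ < 1 := by
    simpa using Real.cos_lt_cos_of_nonneg_of_le_pi le_rfl (by linarith [hϑ.2, Real.pi_pos]) hϑ.1
  have hcos' : -1 ≤ Real.cos ϑ := Real.neg_one_le_cos ϑ
  set ρ := Real.sqrt (2 * (1 - Real.cos ϑ)) / 3
  have hρ : ρ ^ 2 = 2 * (1 - Real.cos ϑ) / 9 := by
    rw [div_pow, Real.sq_sqrt (by linarith)]
    norm_num
  have hρ₀ : 0 < ρ := by positivity
  -- `cos ϑ' = (8 + cos ϑ) / 9` makes the chord of `ϑ'` a third of the chord of `ϑ`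
  refine ⟨ρ, Real.arccos ((8 + Real.cos ϑ) / 9), hρ₀, by nlinarith, by nlinarith,
    ⟨Real.arccos_pos.mpr (by linarith), Real.arccos_le_pi_div_two.mpr (by linarith)⟩, ?_⟩
  rw [Real.cos_arccos (by linarith) (by linarith), hρ]
  linarith

theorem stmt9_general (d : ℕ) (ϑ : ℝ) (hϑ : ϑ ∈ Set.Ioc 0 (Real.pi / 2))
    (Λ : ℝ) (hΛ : 1 ≤ Λ) :
    ∃ (ϑ' C : ℝ), ϑ' ∈ Set.Ioc 0 (Real.pi / 2) ∧ 0 < C ∧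
      ∀ α ∈ Set.Ioo (0 : ℝ) 2, ∀ Γ : Config d, Γ.Admissible ϑ →
        ∀ k : Euc d → Euc d → ℝ≥0∞, Measurable (Function.uncurry k) →
          (∀ x y, k x y = k y x) →
          (∀ x y, (ENNReal.ofReal Λ)⁻¹ * indSum Γ x y * stbl d α x y ≤ k x y ∧
            k x y ≤ ENNReal.ofReal Λ * stbl d α x y) →
          ∀ h : ℝ, 0 < h →
            ∃ Γh : Config d, Γh.Bounded ϑ' ∧
              ∀ x y : Fin d → ℤ,
                Real.sqrt d * h < dist (h • latt d x) (h • latt d y) →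
                  (ENNReal.ofReal C)⁻¹ * indSum Γh (h • latt d x) (h • latt d y) *
                      stbl d α (h • latt d x) (h • latt d y) ≤
                    (ENNReal.ofReal (h ^ (2 * d)))⁻¹ *
                      ∫⁻ p in (cube d h (h • latt d x)) ×ˢ (cube d h (h • latt d y)),
                        k p.1 p.2 ∧
                  (ENNReal.ofReal (h ^ (2 * d)))⁻¹ *
                      (∫⁻ p in (cube d h (h • latt d x)) ×ˢ (cube d h (h • latt d y)),
                        k p.1 p.2) ≤
                    ENNReal.ofReal C * stbl d α (h • latt d x) (h • latt d y) := by
  obtain ⟨ρ, ϑ', hρ, hρ₂, hϑρ, hϑ', hϑ'ρ⟩ := exists_chord_parameters hϑ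
  obtain ⟨F, hF, hnet⟩ := exists_finset_unit_net d hρ
  have hΛ₀ : 0 < Λ := one_pos.trans_le hΛ
  set C₁ := Λ * (1 - Real.sqrt d / Real.sqrt (d + 1)) ^ (-(d : ℝ) - 2)
  set C₂ := 2 * Λ * F.card * 2 ^ ((d : ℝ) + 2) / (ρ / 2) ^ (2 * d)
  have hC₁ : 0 < C₁ :=
    mul_pos hΛ₀ (Real.rpow_pos_of_pos (sub_pos.mpr (sqrt_div_sqrt_succ_lt_one d)) _)
  refine ⟨ϑ', max C₁ C₂, hϑ', lt_max_of_lt_left hC₁, fun α hα Γ hΓ k hk _ hkA h hh => ?_⟩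
  obtain ⟨Γh, hangle, hvol⟩ := exists_config_volume_axis_near Γ hF hnet hϑ' (ρ / 2 * h)
  refine ⟨Γh, fun X => (hangle X).ge, fun x y hsep => ⟨?_, ?_⟩⟩
  · obtain ⟨w, hw, -⟩ := hnet _ (Γ.axis_norm 0)
    calc _ ≤ (ENNReal.ofReal C₂)⁻¹ * indSum Γh (h • latt d x) (h • latt d y) *
          stbl d α (h • latt d x) (h • latt d y) := by gcongr; exact le_max_right _ _
      _ ≤ _ := inv_mul_mul_stbl_le_of_le_card_mul hα.2.le hΛ₀ (by positivity) hh
          (Finset.card_pos.mpr ⟨w, hw⟩) ((mul_nonneg (Real.sqrt_nonneg _) hh.le).trans_lt hsep)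
          (indSum_le_two _ _ _) fun hne => mul_volume_sq_le_card_mul_lintegral
            (fun x y => (hkA x y).1) hk hα.1.le hΓ.1 hϑ.1.le hvol (fun X => hangle X ▸ hϑ'ρ)
            hρ.le hϑρ (by positivity) (by linarith) (by linarith) hh.le hsep.le hne
  · exact (inv_mul_lintegral_cube_prod_le (fun x y => (hkA x y).2) hα.1.le hα.2.le hΛ₀.le hh
      (sqrt_succ_mul_le_dist_smul_latt hh hsep)).trans (by gcongr; exact le_max_left _ _)

/-- Corollary 3.6: two-sided bounds of cone type for the discretized
kernels `ω_h^k` on `hℤ^d`, uniformly in `h`. -/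
theorem stmt9 (d : ℕ) (hd : 1 ≤ d) (ϑ : ℝ) (hϑ : ϑ ∈ Set.Ioc 0 (Real.pi / 2))
    (Λ : ℝ) (hΛ : 1 ≤ Λ) :
    ∃ (ϑ' C : ℝ), ϑ' ∈ Set.Ioc 0 (Real.pi / 2) ∧ 0 < C ∧
      ∀ α ∈ Set.Ioo (0 : ℝ) 2, ∀ Γ : Config d, Γ.Admissible ϑ →
        ∀ k : Euc d → Euc d → ℝ≥0∞, Measurable (Function.uncurry k) →
          (∀ x y, k x y = k y x) →
          (∀ x y, (ENNReal.ofReal Λ)⁻¹ * indSum Γ x y * stbl d α x y ≤ k x y ∧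
            k x y ≤ ENNReal.ofReal Λ * stbl d α x y) →
          ∀ h : ℝ, 0 < h →
            ∃ Γh : Config d, Γh.Bounded ϑ' ∧
              ∀ x y : Fin d → ℤ,
                Real.sqrt d * h < dist (h • latt d x) (h • latt d y) →
                  (ENNReal.ofReal C)⁻¹ * indSum Γh (h • latt d x) (h • latt d y) *
                      stbl d α (h • latt d x) (h • latt d y) ≤
                    (ENNReal.ofReal (h ^ (2 * d)))⁻¹ *
                      ∫⁻ p in (cube d h (h • latt d x)) ×ˢ (cube d h (h • latt d y)),
                        k p.1 p.2 ∧
                  (ENNReal.ofReal (h ^ (2 * d)))⁻¹ *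
                      (∫⁻ p in (cube d h (h • latt d x)) ×ˢ (cube d h (h • latt d y)),
                        k p.1 p.2) ≤
                    ENNReal.ofReal C * stbl d α (h • latt d x) (h • latt d y) :=
  stmt9_general d ϑ hϑ Λ hΛ
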